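/- arXiv:2301.02512 — 2 statements merged into one kernel-verified Lean document; each statement's English description precedes it below -/
import Mathlib

section
/- Let f be a twice-differentiable solution of the Painlevé I equation f''(x) = 6·f(x)² + x and let g(x) = f(x)². Then g satisfies the order-2, degree-4 algebraic differential equation −16x²·g³ − 192x·g⁴ − 576·g⁵ + 4·g²·(g'')² − 4·g·(g')²·g'' + (g')⁴ = 0. -/
/-!
With `g = f²` put `W = 2 g g'' - g'²`; the left-hand side is `W² - 16 g³ (6 g + x)²`, because
`4 g² g''² - 4 g g'² g'' + g'⁴ = W²`. Since `g' = 2 f f'` and `g'' = 2 f'² + 2 f f''`, the `f'²`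
terms cancel in `W`, leaving `W = 4 f³ f'' = 4 f³ (6 g + x)`, whose square is `16 g³ (6 g + x)²`.
-/

open Filter Topology

section

variable {𝕜 : Type*} [NontriviallyNormedField 𝕜] {f : 𝕜 → 𝕜} {x : 𝕜}

theorem deriv_fun_sq (hf : DifferentiableAt 𝕜 f x) :
    deriv (fun t => f t ^ 2) x = 2 * f x * deriv f x := by
  simp [deriv_fun_pow hf]

theorem deriv_deriv_fun_sq (hf : ContDiffAt 𝕜 2 f x) :
    deriv (deriv fun t => f t ^ 2) x = 2 * deriv f x ^ 2 + 2 * f x * deriv (deriv f) x := by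
  have hf' : DifferentiableAt 𝕜 (deriv f) x :=
    (hf.derivWithin (m := 1) (by norm_num)).differentiableAt one_ne_zero
  have hsq : (deriv fun t => f t ^ 2) =ᶠ[𝓝 x] fun t => 2 * (f t * deriv f t) := by
    filter_upwards [hf.eventually (by simp)] with t ht
    rw [deriv_fun_sq (ht.differentiableAt two_ne_zero), mul_assoc]
  rw [hsq.deriv_eq,
    (((hf.differentiableAt two_ne_zero).hasDerivAt.fun_mul hf'.hasDerivAt).const_mul 2).deriv]
  ring

end

/-- If `f` is a (twice continuously differentiable) solution of the Painlevé I equation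
`f'' = 6·f² + x` on an open set and `g = f²`, then `g` satisfies the order-2, degree-4
algebraic differential equation
`−16x²·g³ − 192x·g⁴ − 576·g⁵ + 4·g²·(g'')² − 4·g·(g')²·g'' + (g')⁴ = 0`. -/
theorem sq_painleveI (f : ℝ → ℝ) (s : Set ℝ) (hs : IsOpen s)
    (hf : ContDiffOn ℝ 2 f s)
    (hP : ∀ x ∈ s, deriv (deriv f) x = 6 * f x ^ 2 + x) :
    ∀ x ∈ s,
      -16 * x ^ 2 * (f x ^ 2) ^ 3 - 192 * x * (f x ^ 2) ^ 4 - 576 * (f x ^ 2) ^ 5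
        + 4 * (f x ^ 2) ^ 2 * (deriv (deriv fun t => f t ^ 2) x) ^ 2
        - 4 * (f x ^ 2) * (deriv (fun t => f t ^ 2) x) ^ 2
            * deriv (deriv fun t => f t ^ 2) x
        + (deriv (fun t => f t ^ 2) x) ^ 4 = 0 := by
  intro x hx
  have hfx : ContDiffAt ℝ 2 f x := hf.contDiffAt (hs.mem_nhds hx)
  set g := f x ^ 2
  set g' := deriv (fun t => f t ^ 2) x with hg'
  set g'' := deriv (deriv fun t => f t ^ 2) x with hg''
  rw [deriv_fun_sq (hfx.differentiableAt two_ne_zero)] at hg'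
  rw [deriv_deriv_fun_sq hfx, hP x hx] at hg''
  have hW : 2 * g * g'' - g' ^ 2 = 4 * f x ^ 3 * (6 * g + x) := by
    rw [hg', hg'']
    ring
  linear_combination (2 * g * g'' - g' ^ 2 + 4 * f x ^ 3 * (6 * g + x)) * hW
end

section
/- Let k be a field, I = ⟨f₁, ..., f_r⟩ an ideal in k[y₁, ..., y_n], m ∈ ℕ. Let Ĩ_m ⊂ k[y_{i,ℓ} : 1 ≤ i ≤ n, 0 ≤ ℓ ≤ m] be the jet ideal generated by the coefficients f_{s,j} (0 ≤ j ≤ m) of t^j in f_s(y₁(t), ..., y_n(t)) where y_i(t) = Σ_{ℓ=0}^{m} y_{i,ℓ} t^ℓ, and let I^(≤m) be the differential truncation ideal generated by f_s, f_s', ..., f_s^(m) in k[y_i^(≤m)] with the derivation y_i^(j) ↦ y_i^(j+1). If k has characteristic 0, then the map y_{i,ℓ} ↦ y_i^(ℓ)/ℓ! induces an isomorphism of k-algebras k[y_{i,ℓ}]/Ĩ_m ≅ k[y₁^(≤m), ..., y_n^(≤m)]/I^(≤m). -/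
open MvPolynomial

/-- Substitution of the truncated power series (jets) `y i ↦ ∑_{ℓ=0}^{m} y_{i,ℓ} · tˡ`
into a polynomial in `y₁, …, y_n`, producing a polynomial in `t` whose coefficients lie
in the jet-variable polynomial ring `k[y_{i,ℓ}]`. -/
noncomputable def jetSubst (k : Type*) [CommRing k] (n m : ℕ) :
    MvPolynomial (Fin n) k →ₐ[k] Polynomial (MvPolynomial (Fin n × Fin (m + 1)) k) :=
  MvPolynomial.aeval fun i : Fin n =>
    ∑ ℓ : Fin (m + 1), Polynomial.C (MvPolynomial.X (i, ℓ)) * Polynomial.X ^ (ℓ : ℕ)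

/-- The jet ideal `Ĩ_m`, generated by the coefficients `f_{s,j}` of `tʲ` (`0 ≤ j ≤ m`)
in `f_s(y₁(t), …, y_n(t))`. -/
noncomputable def jetIdeal (k : Type*) [CommRing k] {n r : ℕ}
    (f : Fin r → MvPolynomial (Fin n) k) (m : ℕ) :
    Ideal (MvPolynomial (Fin n × Fin (m + 1)) k) :=
  Ideal.span {g | ∃ (s : Fin r) (j : ℕ), j ≤ m ∧ g = (jetSubst k n m (f s)).coeff j}

/-- The derivation on the truncated differential polynomial ring
`k[y_i⁽ʲ⁾ : 1 ≤ i ≤ n, 0 ≤ j ≤ m]` sending `y_i⁽ʲ⁾ ↦ y_i⁽ʲ⁺¹⁾` for `j < m` and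
`y_i⁽ᵐ⁾ ↦ 0`. -/
noncomputable def truncDeriv (k : Type*) [CommRing k] (n m : ℕ) :
    Derivation k (MvPolynomial (Fin n × Fin (m + 1)) k)
      (MvPolynomial (Fin n × Fin (m + 1)) k) :=
  MvPolynomial.mkDerivation k fun v : Fin n × Fin (m + 1) =>
    if h : (v.2 : ℕ) + 1 < m + 1 then MvPolynomial.X (v.1, ⟨(v.2 : ℕ) + 1, h⟩) else 0

/-- The truncated differential ideal `I^{(≤ m)}`, generated by `f_s, f_s', …, f_s⁽ᵐ⁾`
(each `f_s` viewed in the variables `y_i⁽⁰⁾`). -/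
noncomputable def truncDiffIdeal (k : Type*) [CommRing k] {n r : ℕ}
    (f : Fin r → MvPolynomial (Fin n) k) (m : ℕ) :
    Ideal (MvPolynomial (Fin n × Fin (m + 1)) k) :=
  Ideal.span {g | ∃ (s : Fin r) (j : ℕ), j ≤ m ∧
    g = (⇑(truncDeriv k n m))^[j]
          (MvPolynomial.rename (fun i : Fin n => (i, (0 : Fin (m + 1)))) (f s))}

/-! After rescaling `y_{i,ℓ} ↦ y_{i,ℓ}/ℓ!`, the generic jet becomes `yᵢ(t) = ∑ yᵢ⁽ˡ⁾ tˡ/ℓ!`,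
on which applying `δ` coefficientwise agrees with `d/dt`. Both are derivations of the polynomial
ring in `t`, so they agree on `g(y(t))` for every `g`, and comparing coefficients shows that the
rescaled coefficient of `tʲ` in `g(y(t))` is `δʲ g / j!`. Hence the rescaling carries the
generators of `Ĩ_m` to unit multiples of the generators of `I⁽≤ᵐ⁾`. -/

theorem factorial_nsmul_eq_iterate {M F : Type*} [AddMonoid M] [FunLike F M M]
    [AddMonoidHomClass F M M] (f : F) (c : ℕ → M) (hc : ∀ j, f (c j) = (j + 1) • c (j + 1))
    (j : ℕ) : j.factorial • c j = f^[j] (c 0) := by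
  induction j with
  | zero => simp
  | succ j ih =>
    rw [Function.iterate_succ_apply', ← ih, map_nsmul, hc, smul_smul, Nat.factorial_succ,
      mul_comm]

namespace Derivation

variable {R A : Type*} [CommRing R] [CommRing A] [Algebra R A] (d : Derivation R A A)

noncomputable def mapCoeffsSelf : Derivation R (Polynomial A) (Polynomial A) :=
  PolynomialModule.equivPolynomialSelf.toLinearMap.compDer d.mapCoeffs

@[simp]
theorem coeff_mapCoeffsSelf (p : Polynomial A) (j : ℕ) :
    (d.mapCoeffsSelf p).coeff j = d (p.coeff j) :=
  rfl

theorem mapCoeffsSelf_aeval_eq_derivative {σ : Type*} (x : σ → Polynomial A)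
    (hx : ∀ i, d.mapCoeffsSelf (x i) = Polynomial.derivative (x i)) (g : MvPolynomial σ R) :
    d.mapCoeffsSelf (aeval x g) = Polynomial.derivative (aeval x g) := by
  have hmem : aeval x g ∈ Algebra.adjoin R (Set.range x) := by
    rw [Algebra.adjoin_range_eq_range_aeval]
    exact ⟨g, rfl⟩
  exact eqOn_adjoin (D2 := Polynomial.derivative'.restrictScalars R)
    (by rintro _ ⟨i, rfl⟩; exact hx i) hmem

theorem iterate_coeff_zero_of_mapCoeffsSelf_eq_derivative {p : Polynomial A}
    (hp : d.mapCoeffsSelf p = Polynomial.derivative p) (j : ℕ) :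
    d^[j] (p.coeff 0) = j.factorial • p.coeff j := by
  refine (factorial_nsmul_eq_iterate d p.coeff (fun j => ?_) j).symm
  rw [← d.coeff_mapCoeffsSelf, hp, Polynomial.coeff_derivative, mul_comm, nsmul_eq_mul]
  push_cast
  rfl

end Derivation

namespace MvPolynomial

variable {σ R : Type*} [CommRing R]

noncomputable def scaleVars (u : σ → Rˣ) : MvPolynomial σ R ≃ₐ[R] MvPolynomial σ R :=
  AlgEquiv.ofAlgHom (aeval fun v => (u v : R) • X v) (aeval fun v => (((u v)⁻¹ : Rˣ) : R) • X v)
    (algHom_ext fun v => by simp [smul_smul]) (algHom_ext fun v => by simp [smul_smul])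

@[simp]
theorem scaleVars_X (u : σ → Rˣ) (v : σ) : scaleVars u (X v) = (u v : R) • X v :=
  aeval_X _ v

end MvPolynomial

section Jets

variable (k : Type*) (n m : ℕ)

theorem truncDeriv_X [CommRing k] (v : Fin n × Fin (m + 1)) :
    truncDeriv k n m (X v) =
      if h : (v.2 : ℕ) + 1 < m + 1 then X (v.1, ⟨(v.2 : ℕ) + 1, h⟩) else 0 :=
  mkDerivation_X _ _ _

theorem jetSubst_X_coeff [CommRing k] (i : Fin n) (j : ℕ) :
    (jetSubst k n m (X i)).coeff j = if h : j < m + 1 then X (i, ⟨j, h⟩) else 0 := by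
  simp only [jetSubst, aeval_X, Polynomial.finsetSum_coeff, Polynomial.coeff_C_mul_X_pow]
  split_ifs with h
  · rw [Finset.sum_eq_single ⟨j, h⟩ (fun ℓ _ hℓ => if_neg fun hj => hℓ (Fin.ext hj.symm))
      (by simp)]
    simp
  · exact Finset.sum_eq_zero fun ℓ _ => if_neg fun hj : j = ℓ => h (hj ▸ ℓ.isLt)

variable [Field k] [CharZero k]

noncomputable def jetScale :
    MvPolynomial (Fin n × Fin (m + 1)) k ≃ₐ[k] MvPolynomial (Fin n × Fin (m + 1)) k :=
  scaleVars fun v =>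
    (Units.mk0 ((v.2 : ℕ).factorial : k) (Nat.cast_ne_zero.2 (Nat.factorial_ne_zero _)))⁻¹

theorem jetScale_X (v : Fin n × Fin (m + 1)) :
    jetScale k n m (X v) = (((v.2 : ℕ).factorial : k)⁻¹) • X v := by
  simp [jetScale]

noncomputable def scaledJet :
    MvPolynomial (Fin n) k →ₐ[k] Polynomial (MvPolynomial (Fin n × Fin (m + 1)) k) :=
  (Polynomial.mapAlgHom (jetScale k n m).toAlgHom).comp (jetSubst k n m)

theorem scaledJet_coeff (g : MvPolynomial (Fin n) k) (j : ℕ) :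
    (scaledJet k n m g).coeff j = jetScale k n m ((jetSubst k n m g).coeff j) := by
  simp [scaledJet, Polynomial.coeff_map]

theorem scaledJet_X_coeff (i : Fin n) (j : ℕ) :
    (scaledJet k n m (X i)).coeff j =
      if h : j < m + 1 then ((j.factorial : k)⁻¹) • X (i, ⟨j, h⟩) else 0 := by
  rw [scaledJet_coeff, jetSubst_X_coeff]
  split_ifs <;> simp [jetScale_X]

theorem scaledJet_coeff_zero (g : MvPolynomial (Fin n) k) :
    (scaledJet k n m g).coeff 0 = rename (fun i => (i, (0 : Fin (m + 1)))) g := by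
  have h : Polynomial.constantCoeff.comp (scaledJet k n m).toRingHom =
      (rename fun i => (i, (0 : Fin (m + 1)))).toRingHom :=
    ringHom_ext (fun a => by simp) (fun i => by simp [scaledJet_X_coeff])
  exact DFunLike.congr_fun h g

theorem mapCoeffsSelf_truncDeriv_scaledJet_X (i : Fin n) :
    (truncDeriv k n m).mapCoeffsSelf (scaledJet k n m (X i)) =
      Polynomial.derivative (scaledJet k n m (X i)) := by
  ext1 j
  rw [Derivation.coeff_mapCoeffsSelf, Polynomial.coeff_derivative, scaledJet_X_coeff,
    scaledJet_X_coeff]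
  by_cases hj : j + 1 < m + 1
  · rw [dif_pos (by omega), dif_pos hj, Derivation.map_smul, truncDeriv_X, dif_pos hj, mul_comm,
      ← Nat.cast_succ, ← nsmul_eq_mul, ← Nat.cast_smul_eq_nsmul k, smul_smul]
    congr 1
    rw [Nat.factorial_succ, Nat.cast_mul, mul_inv, ← mul_assoc,
      mul_inv_cancel₀ (Nat.cast_ne_zero.2 j.succ_ne_zero), one_mul]
  · split_ifs <;> simp [truncDeriv_X, hj]

theorem iterate_truncDeriv_rename (g : MvPolynomial (Fin n) k) (j : ℕ) :
    (truncDeriv k n m)^[j] (rename (fun i => (i, (0 : Fin (m + 1)))) g) =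
      j.factorial • jetScale k n m ((jetSubst k n m g).coeff j) := by
  have hg : (truncDeriv k n m).mapCoeffsSelf (scaledJet k n m g) =
      Polynomial.derivative (scaledJet k n m g) := by
    rw [aeval_unique (scaledJet k n m)]
    exact (truncDeriv k n m).mapCoeffsSelf_aeval_eq_derivative _
      (mapCoeffsSelf_truncDeriv_scaledJet_X k n m) g
  rw [← scaledJet_coeff_zero, ← scaledJet_coeff,
    (truncDeriv k n m).iterate_coeff_zero_of_mapCoeffsSelf_eq_derivative hg]

theorem map_jetIdeal {r : ℕ} (f : Fin r → MvPolynomial (Fin n) k) :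
    (jetIdeal k f m).map (jetScale k n m) = truncDiffIdeal k f m := by
  rw [jetIdeal, truncDiffIdeal, Ideal.map_span]
  apply le_antisymm <;> rw [Ideal.span_le]
  · rintro _ ⟨_, ⟨s, j, hj, rfl⟩, rfl⟩
    have hunit : ((j.factorial : k)⁻¹ * j.factorial) = 1 :=
      inv_mul_cancel₀ (Nat.cast_ne_zero.2 j.factorial_ne_zero)
    rw [← one_smul k (jetScale k n m _), ← hunit, mul_smul, Nat.cast_smul_eq_nsmul,
      ← iterate_truncDeriv_rename]
    exact Submodule.smul_of_tower_mem _ _ (Ideal.subset_span ⟨s, j, hj, rfl⟩)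
  · rintro _ ⟨s, j, hj, rfl⟩
    rw [iterate_truncDeriv_rename]
    exact Submodule.smul_of_tower_mem _ _ (Ideal.subset_span ⟨_, ⟨s, j, hj, rfl⟩, rfl⟩)

end Jets

/-- In characteristic `0`, the map `y_{i,ℓ} ↦ y_i⁽ˡ⁾/ℓ!` induces an isomorphism of
`k`-algebras between the jet ring `k[y_{i,ℓ}]/Ĩ_m` and the truncated differential
polynomial ring `k[y₁⁽≤ᵐ⁾, …, y_n⁽≤ᵐ⁾]/I⁽≤ᵐ⁾`. -/
theorem jet_trunc_diff_iso (k : Type*) [Field k] [CharZero k] (n r m : ℕ)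
    (f : Fin r → MvPolynomial (Fin n) k) :
    ∃ e : (MvPolynomial (Fin n × Fin (m + 1)) k ⧸ jetIdeal k f m) ≃ₐ[k]
          (MvPolynomial (Fin n × Fin (m + 1)) k ⧸ truncDiffIdeal k f m),
      ∀ (i : Fin n) (ℓ : Fin (m + 1)),
        e (Ideal.Quotient.mk (jetIdeal k f m) (MvPolynomial.X (i, ℓ))) =
          Ideal.Quotient.mk (truncDiffIdeal k f m)
            ((((ℓ : ℕ).factorial : k)⁻¹) • MvPolynomial.X (i, ℓ)) :=
  ⟨Ideal.quotientEquivAlg _ _ (jetScale k n m) (map_jetIdeal k n m f).symm,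
    fun i ℓ => congrArg (Ideal.Quotient.mk _) (jetScale_X k n m (i, ℓ))⟩
end
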